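/- arXiv:2601.16454 — 2 statements merged into one kernel-verified Lean document; each statement's English description precedes it below -/
import Mathlib

section
/- Let t ≥ 1, N_A, N_B ≥ 2, N = N_A·N_B, and let ψ ∈ ℂ^{N_A·N_B} be a unit vector. Let ν be the product of the Haar probability measures on U(N_A) and U(N_B), and let μ be any Borel probability measure on U(N_A) × U(N_B). For a probability measure κ on U(N_A) × U(N_B) define M_κ = ∫ (((U_A ⊗ U_B)ψ)^{⊗t}) (((U_A ⊗ U_B)ψ)^{⊗t})† dκ(U_A, U_B). Then TD(M_ν, ρ_Haar^{(t)}(N)) ≤ TD(M_μ, ρ_Haar^{(t)}(N)). That is, the uniformly-random local-unitary orbit of ψ is the ensemble closest in trace distance to the Haar-random state moments among all ensembles generated from ψ by non-entangling (local) unitaries. -/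
open MeasureTheory Matrix Finset Filter
open scoped Kronecker ENNReal Real ComplexOrder

noncomputable section

attribute [local instance] Matrix.frobeniusNormedAddCommGroup Matrix.frobeniusNormedSpace

instance {m n α : Type*} [MeasurableSpace α] : MeasurableSpace (Matrix m n α) :=
  inferInstanceAs (MeasurableSpace (m → n → α))

/-- `t`-fold tensor power of a vector. -/
def vpow {I : Type*} (v : I → ℂ) (t : ℕ) : (Fin t → I) → ℂ := fun x => ∏ i, v (x i)

/-- The rank-one matrix `v v†`. -/
def outer {I : Type*} (v : I → ℂ) : Matrix I I ℂ :=
  Matrix.of fun a b => v a * (starRingEnd ℂ) (v b)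

/-- `v^{⊗t} (v^{⊗t})†`. -/
def stateMoment {I : Type*} (t : ℕ) (v : I → ℂ) : Matrix (Fin t → I) (Fin t → I) ℂ :=
  outer (vpow v t)

/-- The trace norm `‖X‖₁ = tr √(X† X)`. -/
def traceNorm {I : Type*} [Fintype I] [DecidableEq I] (X : Matrix I I ℂ) : ℝ :=
  (((Matrix.posSemidef_conjTranspose_mul_self X).1.eigenvectorUnitary : Matrix I I ℂ) *
    diagonal (fun i => ((Real.sqrt ((Matrix.posSemidef_conjTranspose_mul_self X).1.eigenvalues i) : ℝ) : ℂ)) *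
    (star (Matrix.posSemidef_conjTranspose_mul_self X).1.eigenvectorUnitary : Matrix I I ℂ)).trace.re

/-- Trace distance. -/
def traceDist {I : Type*} [Fintype I] [DecidableEq I] (ρ σ : Matrix I I ℂ) : ℝ :=
  traceNorm (ρ - σ) / 2

/-- `ρ_Haar^{(t)}`: the `t`-th moment of Haar random states, built from a fiducial unit
vector `φ` and a Haar probability measure `μ` on the unitary group. -/
def haarMoment {I : Type*} [Fintype I] [DecidableEq I] (t : ℕ)
    (μ : Measure (Matrix.unitaryGroup I ℂ)) (φ : I → ℂ) :
    Matrix (Fin t → I) (Fin t → I) ℂ :=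
  ∫ U, stateMoment t ((U : Matrix I I ℂ).mulVec φ) ∂μ

/-- A unit vector. -/
def IsUnitVec {I : Type*} [Fintype I] (v : I → ℂ) : Prop := ∑ x, ‖v x‖ ^ 2 = 1

/-- Reduced density matrix on the first tensor factor. -/
def redA {A B : Type*} [Fintype B] (ψ : A × B → ℂ) : Matrix A A ℂ :=
  Matrix.of fun a a' => ∑ b, ψ (a, b) * (starRingEnd ℂ) (ψ (a', b))

/-- Second Rényi entanglement entropy across the bipartition `A | B`. -/
def renyi2Ent {A B : Type*} [Fintype A] [Fintype B] (ψ : A × B → ℂ) : ℝ :=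
  - Real.log ((redA ψ * redA ψ).trace.re)


/-- The `t`-th moment of the ensemble `{(U_A ⊗ U_B) ψ}` with `(U_A, U_B) ~ κ`. -/
def localMoment {NA NB : ℕ} (t : ℕ)
    (κ : Measure (Matrix.unitaryGroup (Fin NA) ℂ × Matrix.unitaryGroup (Fin NB) ℂ))
    (ψ : Fin NA × Fin NB → ℂ) :
    Matrix (Fin t → Fin NA × Fin NB) (Fin t → Fin NA × Fin NB) ℂ :=
  ∫ U, stateMoment t
      (((U.1 : Matrix (Fin NA) (Fin NA) ℂ) ⊗ₖ (U.2 : Matrix (Fin NB) (Fin NB) ℂ)).mulVec ψ) ∂κ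

/-!
The local Haar moment is the twirl of every local moment: by right invariance of the product
Haar measure `ν` and Fubini, `M_ν = ∫ K_U M_μ K_U† dν(U)` with `K_U = (U_A ⊗ U_B)^{⊗t}`.
The global Haar moment is fixed by all these conjugations, so `M_ν - ρ_Haar` is a `ν`-average
of unitary conjugates of `M_μ - ρ_Haar`. The trace norm can only decrease under such averages,
as one sees from its dual form `‖X‖₁ = max_W Re tr (W X)` over unitaries `W`, valid for
Hermitian `X`.
-/

-- The Frobenius norm induces the product topology on matrices only up to unfolding, which
-- instance search does not see.
instance {m n : Type*} [Fintype m] [Fintype n] : ContinuousENorm (Matrix m n ℂ) :=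
  SeminormedAddGroup.toContinuousENorm

namespace Matrix

section TraceNorm

variable {I : Type*} [Fintype I] [DecidableEq I] {X : Matrix I I ℂ}

lemma IsHermitian.trace_cfc (hX : X.IsHermitian) (f : ℝ → ℝ) :
    (cfc f X).trace = ∑ i, (f (hX.eigenvalues i) : ℂ) := by
  rw [hX.cfc_eq, IsHermitian.cfc, Unitary.conjStarAlgAut_apply, trace_mul_cycle,
    Unitary.coe_star_mul_self, one_mul, trace_diagonal]
  rfl

lemma IsHermitian.traceNorm_eq_re_trace_cfc_abs (hX : X.IsHermitian) :
    traceNorm X = (cfc (fun x : ℝ => |x|) X).trace.re := by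
  have hsq : Xᴴ * X = cfc (· ^ 2 : ℝ → ℝ) X := by
    rw [cfc_pow_id X 2 hX.isSelfAdjoint, hX.eq, sq]
  have hsqrt : cfc Real.sqrt (Xᴴ * X) = cfc (fun x : ℝ => |x|) X := by
    rw [hsq, ← cfc_comp Real.sqrt (· ^ 2) X hX.isSelfAdjoint]
    simp only [Function.comp_def, Real.sqrt_sq_eq_abs]
  rw [← hsqrt, (posSemidef_conjTranspose_mul_self X).1.cfc_eq]
  rfl

lemma IsHermitian.traceNorm_eq_sum_abs_eigenvalues (hX : X.IsHermitian) :
    traceNorm X = ∑ i, |hX.eigenvalues i| := by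
  rw [hX.traceNorm_eq_re_trace_cfc_abs, hX.trace_cfc, Complex.re_sum]
  rfl

lemma IsHermitian.re_trace_mul_le_traceNorm (hX : X.IsHermitian) {W : Matrix I I ℂ}
    (hW : W ∈ unitaryGroup I ℂ) : (W * X).trace.re ≤ traceNorm X := by
  set V := hX.eigenvectorUnitary
  have hM : star (V : Matrix I I ℂ) * W * V ∈ unitaryGroup I ℂ :=
    mul_mem (mul_mem (Unitary.star_mem V.2) hW) V.2
  have htr : (W * X).trace =
      ∑ i, (star (V : Matrix I I ℂ) * W * V) i i * hX.eigenvalues i := by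
    conv_lhs => rw [hX.spectral_theorem, Unitary.conjStarAlgAut_apply, ← mul_assoc,
      ← mul_assoc, trace_mul_comm, ← mul_assoc, ← mul_assoc]
    simp [V, trace, mul_diagonal]
  rw [htr, Complex.re_sum, hX.traceNorm_eq_sum_abs_eigenvalues]
  refine Finset.sum_le_sum fun i _ => ?_
  calc _ ≤ ‖(star (V : Matrix I I ℂ) * W * V) i i * hX.eigenvalues i‖ := Complex.re_le_norm _
    _ ≤ 1 * |hX.eigenvalues i| := by
      rw [norm_mul, Complex.norm_real, Real.norm_eq_abs]
      gcongr
      exact entry_norm_bound_of_unitary hM i i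
    _ = |hX.eigenvalues i| := one_mul _

lemma IsHermitian.exists_unitary_re_trace_mul_eq_traceNorm (hX : X.IsHermitian) :
    ∃ W ∈ unitaryGroup I ℂ, (W * X).trace.re = traceNorm X := by
  set sign : ℝ → ℝ := fun x => if x < 0 then -1 else 1
  have hsign : sign * sign = 1 := by funext x; by_cases hx : x < 0 <;> simp [sign, hx]
  have habs : sign * id = fun x => |x| := by
    funext x; by_cases hx : x < 0 <;> simp [sign, hx, abs_of_neg, abs_of_nonneg, not_lt.1]
  have hS : IsSelfAdjoint (cfc sign X) := cfc_predicate sign X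
  have hcont : ContinuousOn sign (spectrum ℝ X) := X.finite_real_spectrum.continuousOn sign
  refine ⟨cfc sign X, ?_, ?_⟩
  · rw [mem_unitaryGroup_iff, hS.star_eq, ← cfc_mul sign sign X, ← Pi.mul_def, hsign,
      Pi.one_def, cfc_const_one ℝ X]
  · nth_rewrite 2 [← cfc_id ℝ X]
    rw [← cfc_mul sign id X, ← Pi.mul_def, habs, hX.traceNorm_eq_re_trace_cfc_abs]

end TraceNorm

section Integral

variable {α : Type*} [MeasurableSpace α] {κ : Measure α} {I : Type*} [Fintype I]
  {f : α → Matrix I I ℂ}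

lemma integral_mul_mul (hf : Integrable f κ) (A B : Matrix I I ℂ) :
    ∫ x, A * f x * B ∂κ = A * (∫ x, f x ∂κ) * B :=
  (LinearMap.mulRight ℂ B ∘ₗ LinearMap.mulLeft ℂ A).toContinuousLinearMap.integral_comp_comm hf

lemma trace_mul_integral (hf : Integrable f κ) (W : Matrix I I ℂ) :
    (W * ∫ x, f x ∂κ).trace = ∫ x, (W * f x).trace ∂κ :=
  ((traceLinearMap I ℂ ℂ ∘ₗ LinearMap.mulLeft ℂ W).toContinuousLinearMap.integral_comp_comm
    hf).symm

lemma conjTranspose_integral (hf : Integrable f κ) :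
    (∫ x, f x ∂κ)ᴴ = ∫ x, (f x)ᴴ ∂κ :=
  ((starL' ℝ : Matrix I I ℂ ≃L[ℝ] Matrix I I ℂ).toContinuousLinearMap.integral_comp_comm hf).symm

lemma isHermitian_integral (hf : Integrable f κ) (h : ∀ x, (f x).IsHermitian) :
    (∫ x, f x ∂κ).IsHermitian := by
  rw [IsHermitian, conjTranspose_integral hf]
  exact integral_congr_ae (ae_of_all _ h)

lemma IsHermitian.traceNorm_integral_conj_le [DecidableEq I] [IsProbabilityMeasure κ]
    {D : Matrix I I ℂ} (hD : D.IsHermitian) {K : α → Matrix I I ℂ}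
    (hK : ∀ x, K x ∈ unitaryGroup I ℂ) (hint : Integrable (fun x => K x * D * (K x)ᴴ) κ) :
    traceNorm (∫ x, K x * D * (K x)ᴴ ∂κ) ≤ traceNorm D := by
  have hY : (∫ x, K x * D * (K x)ᴴ ∂κ).IsHermitian :=
    isHermitian_integral hint fun x => isHermitian_mul_mul_conjTranspose _ hD
  obtain ⟨W, hW, hWY⟩ := hY.exists_unitary_re_trace_mul_eq_traceNorm
  have hbound : ∀ x, (W * (K x * D * (K x)ᴴ)).trace.re ≤ traceNorm D := fun x => by
    have hcycle : (W * (K x * D * (K x)ᴴ)).trace = ((K x)ᴴ * W * K x * D).trace := by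
      rw [show W * (K x * D * (K x)ᴴ) = W * K x * D * (K x)ᴴ by simp only [mul_assoc],
        trace_mul_comm, ← mul_assoc, ← mul_assoc]
    rw [hcycle]
    exact hD.re_trace_mul_le_traceNorm (mul_mem (mul_mem (Unitary.star_mem (hK x)) hW) (hK x))
  have hint_tr : Integrable (fun x => (W * (K x * D * (K x)ᴴ)).trace) κ :=
    (traceLinearMap I ℂ ℂ ∘ₗ LinearMap.mulLeft ℂ W).toContinuousLinearMap.integrable_comp hint
  calc traceNorm (∫ x, K x * D * (K x)ᴴ ∂κ)
      = ∫ x, (W * (K x * D * (K x)ᴴ)).trace.re ∂κ := by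
        rw [← hWY, trace_mul_integral hint]
        exact (integral_re hint_tr).symm
    _ ≤ ∫ _, traceNorm D ∂κ := integral_mono hint_tr.re (integrable_const _) hbound
    _ = traceNorm D := by simp

end Integral

end Matrix

section UnitaryGroup

variable {n 𝕜 : Type*} [Fintype n] [DecidableEq n] [RCLike 𝕜]

instance : CompactSpace (unitaryGroup n 𝕜) := by
  have hsub : (unitaryGroup n 𝕜 : Set (Matrix n n 𝕜)) ⊆
      Set.univ.pi fun _ => Set.univ.pi fun _ => Metric.closedBall (0 : 𝕜) 1 :=
    fun _ hU i _ j _ => by simpa using entry_norm_bound_of_unitary hU i j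
  exact isCompact_iff_compactSpace.mp <|
    (isCompact_univ_pi fun _ => isCompact_univ_pi fun _ => isCompact_closedBall 0 1)
      |>.of_isClosed_subset (isClosed_unitary (R := Matrix n n 𝕜)) hsub

instance : BorelSpace (Matrix n n 𝕜) := inferInstanceAs (BorelSpace (n → n → 𝕜))

instance : SecondCountableTopology (Matrix n n 𝕜) :=
  inferInstanceAs (SecondCountableTopology (n → n → 𝕜))

instance : BorelSpace (unitaryGroup n 𝕜) := Subtype.borelSpace _

instance : SecondCountableTopology (unitaryGroup n 𝕜) :=
  TopologicalSpace.Subtype.secondCountableTopology _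

end UnitaryGroup

lemma Continuous.integrable_of_compactSpace {X E : Type*} [TopologicalSpace X] [CompactSpace X]
    [MeasurableSpace X] [OpensMeasurableSpace X] [NormedAddCommGroup E] {f : X → E}
    (hf : Continuous f) (κ : Measure X) [IsFiniteMeasure κ] : Integrable f κ :=
  hf.integrable_of_hasCompactSupport (HasCompactSupport.of_compactSpace f)

lemma MeasureTheory.Measure.IsHaarMeasure.isMulRightInvariant_of_isProbabilityMeasure
    {G : Type*} [Group G] [TopologicalSpace G] [IsTopologicalGroup G] [LocallyCompactSpace G]
    [MeasurableSpace G] [BorelSpace G] (μ : Measure G) [μ.IsHaarMeasure] [IsProbabilityMeasure μ] :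
    μ.IsMulRightInvariant where
  map_mul_right_eq_self g :=
    have := Measure.isProbabilityMeasure_map (μ := μ) (measurable_mul_const g).aemeasurable
    Measure.isHaarMeasure_eq_of_isProbabilityMeasure _ _

section TensorPower

variable {I R : Type*}

def tpow [CommSemiring R] (M : Matrix I I R) (t : ℕ) : Matrix (Fin t → I) (Fin t → I) R :=
  Matrix.of fun x y => ∏ i, M (x i) (y i)

lemma tpow_mul [Fintype I] [CommSemiring R] (M N : Matrix I I R) (t : ℕ) :
    tpow (M * N) t = tpow M t * tpow N t := by
  ext x y
  simp only [tpow, of_apply, mul_apply, Finset.prod_univ_sum, Fintype.piFinset_univ,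
    Finset.prod_mul_distrib]

lemma tpow_one [DecidableEq I] [CommSemiring R] (t : ℕ) : tpow (1 : Matrix I I R) t = 1 := by
  ext x y
  simp only [tpow, of_apply, one_apply, Finset.prod_ite_zero, Finset.prod_const_one,
    Finset.mem_univ, true_imp_iff, funext_iff]

lemma tpow_conjTranspose [CommSemiring R] [StarRing R] (M : Matrix I I R) (t : ℕ) :
    tpow Mᴴ t = (tpow M t)ᴴ := by
  ext x y
  simp [tpow, conjTranspose_apply]

lemma tpow_mem_unitaryGroup [Fintype I] [DecidableEq I] [CommRing R] [StarRing R]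
    {M : Matrix I I R} (hM : M ∈ unitaryGroup I R) (t : ℕ) :
    tpow M t ∈ unitaryGroup (Fin t → I) R := by
  rw [mem_unitaryGroup_iff] at hM ⊢
  rw [star_eq_conjTranspose, ← tpow_conjTranspose, ← tpow_mul,
    ← star_eq_conjTranspose, hM, tpow_one]

lemma continuous_tpow [CommSemiring R] [TopologicalSpace R] [IsTopologicalSemiring R] (t : ℕ) :
    Continuous fun M : Matrix I I R => tpow M t :=
  continuous_matrix fun x y => by
    simp only [tpow, of_apply]
    exact continuous_finsetProd _ fun i _ => continuous_id.matrix_elem (x i) (y i)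

lemma vpow_mulVec [Fintype I] (M : Matrix I I ℂ) (v : I → ℂ) (t : ℕ) :
    vpow (M *ᵥ v) t = tpow M t *ᵥ vpow v t := by
  funext x
  simp only [vpow, mulVec, dotProduct, tpow, of_apply, Finset.prod_univ_sum,
    Fintype.piFinset_univ, Finset.prod_mul_distrib]

lemma outer_mulVec [Fintype I] (M : Matrix I I ℂ) (v : I → ℂ) :
    outer (M *ᵥ v) = M * outer v * Mᴴ := by
  ext a b
  simp only [outer, of_apply, mul_apply, conjTranspose_apply, mulVec, dotProduct,
    Finset.sum_mul, Finset.mul_sum, map_sum, map_mul, RCLike.star_def]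
  exact Finset.sum_congr rfl fun _ _ => Finset.sum_congr rfl fun _ _ => by ring

lemma stateMoment_mulVec [Fintype I] (M : Matrix I I ℂ) (v : I → ℂ) (t : ℕ) :
    stateMoment t (M *ᵥ v) = tpow M t * stateMoment t v * (tpow M t)ᴴ := by
  rw [stateMoment, vpow_mulVec, outer_mulVec, stateMoment]

lemma stateMoment_isHermitian (t : ℕ) (v : I → ℂ) : (stateMoment t v).IsHermitian := by
  ext a b
  simp [stateMoment, outer, conjTranspose_apply, mul_comm]

lemma continuous_stateMoment {X : Type*} [TopologicalSpace X] (t : ℕ) {v : X → I → ℂ}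
    (hv : Continuous v) : Continuous fun x => stateMoment t (v x) :=
  continuous_matrix fun a b =>
    (continuous_finsetProd _ fun i _ => (continuous_apply (a i)).comp hv).mul <|
      Complex.continuous_conj.comp <|
        continuous_finsetProd _ fun i _ => (continuous_apply (b i)).comp hv

end TensorPower

section Averaging

variable {G : Type*} [Group G] [TopologicalSpace G] [IsTopologicalGroup G] [CompactSpace G]
  [SecondCountableTopology G] [MeasurableSpace G] [BorelSpace G]
  {J : Type*} [Fintype J] {f K : G → Matrix J J ℂ}

lemma integral_eq_integral_conj_integral (ν μ : Measure G) [IsFiniteMeasure ν]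
    [ν.IsMulRightInvariant] [IsProbabilityMeasure μ] (hf : Continuous f)
    (hfK : ∀ g h, f (g * h) = K g * f h * (K g)ᴴ) :
    ∫ g, f g ∂ν = ∫ g, K g * (∫ h, f h ∂μ) * (K g)ᴴ ∂ν := by
  have hint : Integrable (fun p : G × G => f (p.1 * p.2)) (ν.prod μ) :=
    (hf.comp continuous_mul).integrable_of_compactSpace _
  calc ∫ g, f g ∂ν = ∫ h, ∫ g, f (g * h) ∂ν ∂μ := by
        simp only [integral_mul_right_eq_self, integral_const, probReal_univ, one_smul]
    _ = ∫ g, ∫ h, f (g * h) ∂μ ∂ν := (integral_integral_swap hint).symm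
    _ = _ := by simp only [hfK, Matrix.integral_mul_mul (hf.integrable_of_compactSpace μ)]

lemma traceNorm_integral_sub_le [DecidableEq J] (ν μ : Measure G) [IsProbabilityMeasure ν]
    [ν.IsMulRightInvariant] [IsProbabilityMeasure μ] (hK : Continuous K)
    (hK_mem : ∀ g, K g ∈ unitaryGroup J ℂ) (hf : Continuous f)
    (hfK : ∀ g h, f (g * h) = K g * f h * (K g)ᴴ) (hf_herm : ∀ g, (f g).IsHermitian)
    {ρ : Matrix J J ℂ} (hρ : ρ.IsHermitian) (hρK : ∀ g, K g * ρ * (K g)ᴴ = ρ) :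
    traceNorm (∫ g, f g ∂ν - ρ) ≤ traceNorm (∫ g, f g ∂μ - ρ) := by
  have hconj (D : Matrix J J ℂ) : Integrable (fun g => K g * D * (K g)ᴴ) ν :=
    ((hK.matrix_mul continuous_const).matrix_mul hK.matrix_conjTranspose)
      |>.integrable_of_compactSpace ν
  have htwirl : ∫ g, f g ∂ν - ρ = ∫ g, K g * (∫ h, f h ∂μ - ρ) * (K g)ᴴ ∂ν := by
    simp only [mul_sub, sub_mul]
    rw [integral_sub (hconj _) (hconj _), ← integral_eq_integral_conj_integral ν μ hf hfK]
    simp [hρK]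
  rw [htwirl]
  exact ((Matrix.isHermitian_integral (hf.integrable_of_compactSpace μ) hf_herm).sub hρ)
    |>.traceNorm_integral_conj_le hK_mem (hconj _)

end Averaging

section Moments

variable {I : Type*} [Fintype I] [DecidableEq I]

lemma isHermitian_haarMoment (t : ℕ) (μ : Measure (unitaryGroup I ℂ)) [IsFiniteMeasure μ]
    (φ : I → ℂ) : (haarMoment t μ φ).IsHermitian :=
  Matrix.isHermitian_integral
    ((continuous_stateMoment t (continuous_subtype_val.matrix_mulVec continuous_const))
      |>.integrable_of_compactSpace μ) fun _ => stateMoment_isHermitian _ _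

lemma tpow_mul_haarMoment_mul_conjTranspose (t : ℕ) (μ : Measure (unitaryGroup I ℂ))
    [μ.IsMulLeftInvariant] [IsFiniteMeasure μ] (φ : I → ℂ) (W : unitaryGroup I ℂ) :
    tpow W t * haarMoment t μ φ * (tpow W t)ᴴ = haarMoment t μ φ := by
  conv_rhs => rw [haarMoment, ← integral_mul_left_eq_self _ W]
  rw [haarMoment, ← Matrix.integral_mul_mul
    ((continuous_stateMoment t (continuous_subtype_val.matrix_mulVec continuous_const))
      |>.integrable_of_compactSpace μ)]
  simp only [Submonoid.coe_mul, ← mulVec_mulVec, stateMoment_mulVec]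

lemma stateMoment_mulVec_map_mul {G : Type*} [Monoid G] (σ : G →* unitaryGroup I ℂ)
    (t : ℕ) (ψ : I → ℂ) (g h : G) :
    stateMoment t ((σ (g * h) : Matrix I I ℂ) *ᵥ ψ) =
      tpow (σ g : Matrix I I ℂ) t * stateMoment t ((σ h : Matrix I I ℂ) *ᵥ ψ) *
        (tpow (σ g : Matrix I I ℂ) t)ᴴ := by
  rw [map_mul, Submonoid.coe_mul, ← mulVec_mulVec, stateMoment_mulVec]

variable {A B : Type*} [Fintype A] [DecidableEq A] [Fintype B] [DecidableEq B]

def kroneckerUnitary :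
    unitaryGroup A ℂ × unitaryGroup B ℂ →* unitaryGroup (A × B) ℂ where
  toFun U := ⟨(U.1 : Matrix A A ℂ) ⊗ₖ (U.2 : Matrix B B ℂ), kronecker_mem_unitary U.1.2 U.2.2⟩
  map_one' := Subtype.ext one_kronecker_one
  map_mul' _ _ := Subtype.ext (mul_kronecker_mul _ _ _ _)

lemma continuous_kroneckerUnitary :
    Continuous (kroneckerUnitary : unitaryGroup A ℂ × unitaryGroup B ℂ → _) :=
  Continuous.subtype_mk (continuous_matrix fun (a b : A × B) =>
    ((continuous_subtype_val.comp continuous_fst).matrix_elem a.1 b.1).mul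
      ((continuous_subtype_val.comp continuous_snd).matrix_elem a.2 b.2)) _

end Moments

theorem local_haar_uniform_is_closest_general
    (t NA NB : ℕ)
    (ψ : Fin NA × Fin NB → ℂ)
    (μA : Measure (Matrix.unitaryGroup (Fin NA) ℂ))
    (hμA : μA.IsHaarMeasure) (hμA1 : IsProbabilityMeasure μA)
    (μB : Measure (Matrix.unitaryGroup (Fin NB) ℂ))
    (hμB : μB.IsHaarMeasure) (hμB1 : IsProbabilityMeasure μB)
    (μ : Measure (Matrix.unitaryGroup (Fin NA) ℂ × Matrix.unitaryGroup (Fin NB) ℂ))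
    (hμ1 : IsProbabilityMeasure μ)
    (μH : Measure (Matrix.unitaryGroup (Fin NA × Fin NB) ℂ))
    (hμH : μH.IsHaarMeasure)
    (φ : Fin NA × Fin NB → ℂ) :
    traceDist (localMoment t (μA.prod μB) ψ) (haarMoment t μH φ)
      ≤ traceDist (localMoment t μ ψ) (haarMoment t μH φ) := by
  have hν := Measure.IsHaarMeasure.isMulRightInvariant_of_isProbabilityMeasure (μA.prod μB)
  have hσ : Continuous fun U : unitaryGroup (Fin NA) ℂ × unitaryGroup (Fin NB) ℂ =>
      (kroneckerUnitary U : Matrix (Fin NA × Fin NB) (Fin NA × Fin NB) ℂ) :=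
    continuous_subtype_val.comp continuous_kroneckerUnitary
  have hK := (continuous_tpow t).comp hσ
  have hf := continuous_stateMoment t (hσ.matrix_mulVec (continuous_const (y := ψ)))
  exact div_le_div_of_nonneg_right (traceNorm_integral_sub_le (μA.prod μB) μ hK
    (fun U => tpow_mem_unitaryGroup (kroneckerUnitary U).2 t) hf
    (stateMoment_mulVec_map_mul kroneckerUnitary t ψ)
    (fun _ => stateMoment_isHermitian _ _) (isHermitian_haarMoment t μH φ)
    (fun U => tpow_mul_haarMoment_mul_conjTranspose t μH φ _)) zero_le_two

/-- Among all ensembles generated from `ψ` by local (non-entangling)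
unitaries, the uniformly-random local-unitary orbit is closest in trace distance to the
Haar-random state moments. -/
theorem local_haar_uniform_is_closest
    (t NA NB : ℕ) (ht : 1 ≤ t) (hNA : 2 ≤ NA) (hNB : 2 ≤ NB)
    (ψ : Fin NA × Fin NB → ℂ) (hψ : IsUnitVec ψ)
    (μA : Measure (Matrix.unitaryGroup (Fin NA) ℂ))
    (hμA : μA.IsHaarMeasure) (hμA1 : IsProbabilityMeasure μA)
    (μB : Measure (Matrix.unitaryGroup (Fin NB) ℂ))
    (hμB : μB.IsHaarMeasure) (hμB1 : IsProbabilityMeasure μB)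
    (μ : Measure (Matrix.unitaryGroup (Fin NA) ℂ × Matrix.unitaryGroup (Fin NB) ℂ))
    (hμ1 : IsProbabilityMeasure μ)
    (μH : Measure (Matrix.unitaryGroup (Fin NA × Fin NB) ℂ))
    (hμH : μH.IsHaarMeasure) (hμH1 : IsProbabilityMeasure μH)
    (φ : Fin NA × Fin NB → ℂ) (hφ : IsUnitVec φ) :
    traceDist (localMoment t (μA.prod μB) ψ) (haarMoment t μH φ)
      ≤ traceDist (localMoment t μ ψ) (haarMoment t μH φ) :=
  local_haar_uniform_is_closest_general t NA NB ψ μA hμA hμA1 μB hμB hμB1 μ hμ1 μH hμH φ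
end
end

section
/- Let α > 0 with α ≠ 2, let a, b be real constants with 0 < a ≤ 1 and b ≥ 1, and let C₁, C₂, C₁', C₂' > 0. Then there exist a natural number L ≥ 1 and a probability distribution p on Fin L such that either C₂'·exp(−b·R_α(p)) < C₁·exp(−R₂(p)) or C₂·exp(−R₂(p)) < C₁'·exp(−a·R_α(p)). Consequently, there is no function ε assigning a real number to every finite probability distribution that satisfies both C₁·exp(−R₂(p)) ≤ ε(p) ≤ C₂·exp(−R₂(p)) and C₁'·exp(−a·R_α(p)) ≤ ε(p) ≤ C₂'·exp(−b·R_α(p)) for all finite probability distributions p: only the second Rényi entropy can tightly bound such a quantity. -/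
/-!
Test against `spike n t`: mass `t` on one atom and `(1 - t) / n` on each of `n` others. As
`n → ∞` with `α > 1`, the tail drops out of the power sums, so `R_α → α / (α - 1) · log t⁻¹` and
`R₂ → 2 log t⁻¹`; the gap `(2 - α) / (α - 1) · log t⁻¹` has the sign of `2 - α` and is unbounded
as `t → 0`. For `α ≤ 1` the tail dominates instead, so `R_α → ∞` while `R₂` stays bounded.
Since Rényi entropies are nonnegative and `a ≤ 1 ≤ b`, an unbounded gap between `R_α` and `R₂`
in either direction breaks one of the two-sided bounds.
-/

open Finset Filter

noncomputable section

/-- Rényi entropy of order `α` of a distribution on `Fin L` (Shannon entropy at `α = 1`),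
with natural logarithms, the sums running over the support of `p`. -/
def renyi {L : ℕ} (α : ℝ) (p : Fin L → ℝ) : ℝ :=
  if α = 1 then -∑ s, (if 0 < p s then p s * Real.log (p s) else 0)
  else (1 - α)⁻¹ * Real.log (∑ s, (if 0 < p s then p s ^ α else 0))

open Real Topology

lemma renyi_nonneg {L : ℕ} {p : Fin L → ℝ} (hp0 : ∀ s, 0 ≤ p s) (hp1 : ∑ s, p s = 1) (α : ℝ) :
    0 ≤ renyi α p := by
  have hp_le_one : ∀ s, p s ≤ 1 := fun s =>
    hp1 ▸ single_le_sum (fun i _ => hp0 i) (mem_univ s)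
  unfold renyi
  split_ifs with hα
  · refine neg_nonneg.mpr (sum_nonpos fun s _ => ?_)
    split_ifs with hs
    · exact mul_nonpos_of_nonneg_of_nonpos hs.le (log_nonpos hs.le (hp_le_one s))
    · rfl
  rcases lt_or_gt_of_ne hα with hα | hα
  · have h_one_le : 1 ≤ ∑ s, (if 0 < p s then p s ^ α else 0) := by
      refine hp1 ▸ sum_le_sum fun s _ => ?_
      split_ifs with hs
      · simpa using rpow_le_rpow_of_exponent_ge hs (hp_le_one s) hα.le
      · exact not_lt.mp hs
    exact mul_nonneg (inv_nonneg.mpr (by linarith)) (log_nonneg h_one_le)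
  · have h_le_one : ∑ s, (if 0 < p s then p s ^ α else 0) ≤ 1 := by
      refine hp1 ▸ sum_le_sum fun s _ => ?_
      split_ifs with hs
      · simpa using rpow_le_rpow_of_exponent_ge hs (hp_le_one s) hα.le
      · exact hp0 s
    have h_nonneg : 0 ≤ ∑ s, (if 0 < p s then p s ^ α else 0) :=
      sum_nonneg fun s _ => by split_ifs <;> positivity
    exact mul_nonneg_of_nonpos_of_nonpos (inv_nonpos.mpr (by linarith))
      (log_nonpos h_nonneg h_le_one)

lemma renyi_of_pos {L : ℕ} {p : Fin L → ℝ} (hp : ∀ s, 0 < p s) {α : ℝ} (hα : α ≠ 1) :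
    renyi α p = (1 - α)⁻¹ * log (∑ s, p s ^ α) := by
  simp only [renyi, if_neg hα, hp, if_true]

lemma renyi_one_of_pos {L : ℕ} {p : Fin L → ℝ} (hp : ∀ s, 0 < p s) :
    renyi 1 p = -∑ s, p s * log (p s) := by
  simp only [renyi, hp, if_true]

lemma mul_exp_neg_lt_mul_exp_neg {C D x y : ℝ} (hC : 0 < C) (hD : 0 < D)
    (h : log C - log D < x - y) : C * exp (-x) < D * exp (-y) := by
  rw [← exp_log hC, ← exp_log hD, ← exp_add, ← exp_add, exp_lt_exp]
  linarith

def spike (n : ℕ) (t : ℝ) : Fin (n + 1) → ℝ := fun s => if s = 0 then t else (1 - t) / n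

section spike

variable {n : ℕ} {t : ℝ}

lemma spike_pos (hn : 0 < n) (ht0 : 0 < t) (ht1 : t < 1) (s : Fin (n + 1)) :
    0 < spike n t s := by
  unfold spike
  split_ifs
  · exact ht0
  · exact div_pos (by linarith) (by exact_mod_cast hn)

lemma sum_spike (hn : 0 < n) : ∑ s, spike n t s = 1 := by
  have hn' : (n : ℝ) ≠ 0 := by exact_mod_cast hn.ne'
  simp only [spike, Fin.sum_univ_succ, ↓reduceIte, Fin.succ_ne_zero, sum_const, card_univ,
    Fintype.card_fin, nsmul_eq_mul]
  field_simp
  ring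

lemma sum_spike_rpow (hn : 0 < n) (ht1 : t < 1) (α : ℝ) :
    ∑ s, spike n t s ^ α = t ^ α + (1 - t) ^ α * (n : ℝ) ^ (1 - α) := by
  have hn' : (0 : ℝ) < n := by exact_mod_cast hn
  simp only [spike, Fin.sum_univ_succ, ↓reduceIte, Fin.succ_ne_zero, sum_const, card_univ,
    Fintype.card_fin, nsmul_eq_mul]
  rw [div_rpow (by linarith) hn'.le, rpow_sub hn', rpow_one]
  field_simp

lemma renyi_spike (hn : 0 < n) (ht0 : 0 < t) (ht1 : t < 1) {α : ℝ} (hα : α ≠ 1) :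
    renyi α (spike n t) = (1 - α)⁻¹ * log (t ^ α + (1 - t) ^ α * (n : ℝ) ^ (1 - α)) := by
  rw [renyi_of_pos (spike_pos hn ht0 ht1) hα, sum_spike_rpow hn ht1]

lemma renyi_one_spike (hn : 0 < n) (ht0 : 0 < t) (ht1 : t < 1) :
    renyi 1 (spike n t) = -(t * log t) - (1 - t) * log (1 - t) + (1 - t) * log n := by
  have hn' : (0 : ℝ) < n := by exact_mod_cast hn
  rw [renyi_one_of_pos (spike_pos hn ht0 ht1)]
  simp only [spike, Fin.sum_univ_succ, ↓reduceIte, Fin.succ_ne_zero, sum_const, card_univ,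
    Fintype.card_fin, nsmul_eq_mul]
  rw [log_div (by linarith) hn'.ne']
  field_simp
  ring

lemma tendsto_renyi_spike_of_one_lt {α : ℝ} (hα : 1 < α) (ht0 : 0 < t) (ht1 : t < 1) :
    Tendsto (fun n => renyi α (spike n t)) atTop (𝓝 (α / (α - 1) * log t⁻¹)) := by
  have h_tail : Tendsto (fun n : ℕ => (n : ℝ) ^ (1 - α)) atTop (𝓝 0) := by
    have h := (tendsto_rpow_neg_atTop (sub_pos.mpr hα)).comp tendsto_natCast_atTop_atTop
    rwa [neg_sub] at h
  have h_sum : Tendsto (fun n : ℕ => t ^ α + (1 - t) ^ α * (n : ℝ) ^ (1 - α)) atTop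
      (𝓝 (t ^ α)) := by
    simpa using (h_tail.const_mul ((1 - t) ^ α)).const_add (t ^ α)
  have h_lim : (1 - α)⁻¹ * log (t ^ α) = α / (α - 1) * log t⁻¹ := by
    rw [log_rpow ht0, log_inv, div_eq_mul_inv, ← neg_sub α 1, inv_neg]
    ring
  rw [← h_lim]
  refine ((h_sum.log (rpow_pos_of_pos ht0 α).ne').const_mul _).congr' ?_
  filter_upwards [eventually_gt_atTop 0] with n hn
  rw [renyi_spike hn ht0 ht1 hα.ne']

lemma tendsto_renyi_spike_atTop_of_lt_one {α : ℝ} (hα : α < 1) (ht0 : 0 < t) (ht1 : t < 1) :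
    Tendsto (fun n => renyi α (spike n t)) atTop atTop := by
  have h_tail : Tendsto (fun n : ℕ => (1 - t) ^ α * (n : ℝ) ^ (1 - α)) atTop atTop :=
    ((tendsto_rpow_atTop (sub_pos.mpr hα)).comp tendsto_natCast_atTop_atTop).const_mul_atTop
      (rpow_pos_of_pos (sub_pos.mpr ht1) α)
  have h_sum := tendsto_log_atTop.comp (tendsto_atTop_add_const_left _ (t ^ α) h_tail)
  refine (h_sum.const_mul_atTop (inv_pos.mpr (sub_pos.mpr hα))).congr' ?_
  filter_upwards [eventually_gt_atTop 0] with n hn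
  rw [renyi_spike hn ht0 ht1 hα.ne]
  rfl

lemma tendsto_renyi_one_spike_atTop (ht0 : 0 < t) (ht1 : t < 1) :
    Tendsto (fun n => renyi 1 (spike n t)) atTop atTop := by
  have h_log : Tendsto (fun n : ℕ => (1 - t) * log n) atTop atTop :=
    (tendsto_log_atTop.comp tendsto_natCast_atTop_atTop).const_mul_atTop (sub_pos.mpr ht1)
  refine (tendsto_atTop_add_const_left _ (-(t * log t) - (1 - t) * log (1 - t)) h_log).congr' ?_
  filter_upwards [eventually_gt_atTop 0] with n hn
  rw [renyi_one_spike hn ht0 ht1]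

end spike

lemma exists_lt_mul_log_inv {κ : ℝ} (hκ : 0 < κ) (c : ℝ) :
    ∃ t : ℝ, 0 < t ∧ t < 1 ∧ c < κ * log t⁻¹ := by
  set y := max c 0 / κ + 1
  have hy : 0 < y := by positivity
  refine ⟨exp (-y), exp_pos _, exp_lt_one_iff.mpr (neg_lt_zero.mpr hy), ?_⟩
  have hκy : κ * y = max c 0 + κ := by rw [mul_add, mul_div_cancel₀ _ hκ.ne', mul_one]
  rw [← exp_neg, neg_neg, log_exp, hκy]
  linarith [le_max_left c 0]

lemma exists_spike_lt_renyi_sub_renyi_two {α : ℝ} (hα : α < 2) (c : ℝ) :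
    ∃ n t, 0 < n ∧ 0 < t ∧ t < 1 ∧ c < renyi α (spike n t) - renyi 2 (spike n t) := by
  rcases le_or_gt α 1 with hα1 | hα1
  · have h_R₂ := tendsto_renyi_spike_of_one_lt one_lt_two (one_half_pos (α := ℝ)) one_half_lt_one
    have h_Rα : Tendsto (fun n => renyi α (spike n (1 / 2))) atTop atTop := by
      rcases hα1.lt_or_eq with hα1 | rfl
      · exact tendsto_renyi_spike_atTop_of_lt_one hα1 one_half_pos one_half_lt_one
      · exact tendsto_renyi_one_spike_atTop one_half_pos one_half_lt_one
    have h_gap := (h_Rα.atTop_add h_R₂.neg).eventually_gt_atTop c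
    obtain ⟨n, hc, hn⟩ := (h_gap.and (eventually_gt_atTop 0)).exists
    exact ⟨n, 1 / 2, hn, one_half_pos, one_half_lt_one, hc⟩
  · obtain ⟨t, ht0, ht1, hc⟩ :=
      exists_lt_mul_log_inv (κ := (2 - α) / (α - 1)) (div_pos (by linarith) (by linarith)) c
    have h_lim := (tendsto_renyi_spike_of_one_lt hα1 ht0 ht1).sub
      (tendsto_renyi_spike_of_one_lt one_lt_two ht0 ht1)
    have h_gap : α / (α - 1) * log t⁻¹ - 2 / (2 - 1) * log t⁻¹
        = (2 - α) / (α - 1) * log t⁻¹ := by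
      field_simp [(sub_pos.mpr hα1).ne']
      ring
    rw [h_gap] at h_lim
    obtain ⟨n, hc, hn⟩ := ((h_lim.eventually_const_lt hc).and (eventually_gt_atTop 0)).exists
    exact ⟨n, t, hn, ht0, ht1, hc⟩

lemma exists_spike_lt_renyi_two_sub_renyi {α : ℝ} (hα : 2 < α) (c : ℝ) :
    ∃ n t, 0 < n ∧ 0 < t ∧ t < 1 ∧ c < renyi 2 (spike n t) - renyi α (spike n t) := by
  obtain ⟨t, ht0, ht1, hc⟩ :=
    exists_lt_mul_log_inv (κ := (α - 2) / (α - 1)) (div_pos (by linarith) (by linarith)) c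
  have h_lim := (tendsto_renyi_spike_of_one_lt one_lt_two ht0 ht1).sub
    (tendsto_renyi_spike_of_one_lt (one_lt_two.trans hα) ht0 ht1)
  have h_gap : 2 / (2 - 1) * log t⁻¹ - α / (α - 1) * log t⁻¹
      = (α - 2) / (α - 1) * log t⁻¹ := by
    field_simp [(show (0 : ℝ) < α - 1 by linarith).ne']
    ring
  rw [h_gap] at h_lim
  obtain ⟨n, hc, hn⟩ := ((h_lim.eventually_const_lt hc).and (eventually_gt_atTop 0)).exists
  exact ⟨n, t, hn, ht0, ht1, hc⟩

theorem renyi_two_is_the_unique_tight_exponent_general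
    (α : ℝ) (hα2 : α ≠ 2)
    (a b : ℝ) (ha1 : a ≤ 1) (hb : 1 ≤ b)
    (C₁ C₂ C₁' C₂' : ℝ) (hC₁ : 0 < C₁) (hC₂ : 0 < C₂) (hC₁' : 0 < C₁') (hC₂' : 0 < C₂') :
    (∃ (L : ℕ) (p : Fin L → ℝ), 1 ≤ L ∧ (∀ s, 0 ≤ p s) ∧ (∑ s, p s = 1) ∧
        (C₂' * Real.exp (-(b * renyi α p)) < C₁ * Real.exp (-(renyi 2 p)) ∨
          C₂ * Real.exp (-(renyi 2 p)) < C₁' * Real.exp (-(a * renyi α p)))) ∧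
      ¬∃ ε : (L : ℕ) → (Fin L → ℝ) → ℝ,
          ∀ (L : ℕ) (p : Fin L → ℝ), (∀ s, 0 ≤ p s) → (∑ s, p s = 1) →
            (C₁ * Real.exp (-(renyi 2 p)) ≤ ε L p ∧ ε L p ≤ C₂ * Real.exp (-(renyi 2 p)) ∧
              C₁' * Real.exp (-(a * renyi α p)) ≤ ε L p ∧
              ε L p ≤ C₂' * Real.exp (-(b * renyi α p))) := by
  have h_violation : ∃ (L : ℕ) (p : Fin L → ℝ), 1 ≤ L ∧ (∀ s, 0 ≤ p s) ∧ (∑ s, p s = 1) ∧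
      (C₂' * exp (-(b * renyi α p)) < C₁ * exp (-(renyi 2 p)) ∨
        C₂ * exp (-(renyi 2 p)) < C₁' * exp (-(a * renyi α p))) := by
    rcases hα2.lt_or_gt with hα | hα
    · obtain ⟨n, t, hn, ht0, ht1, hc⟩ := exists_spike_lt_renyi_sub_renyi_two hα (log C₂' - log C₁)
      have hp0 : ∀ s, 0 ≤ spike n t s := fun s => (spike_pos hn ht0 ht1 s).le
      have hR := renyi_nonneg hp0 (sum_spike hn) α
      refine ⟨n + 1, spike n t, by omega, hp0, sum_spike hn,
        Or.inl (mul_exp_neg_lt_mul_exp_neg hC₂' hC₁ ?_)⟩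
      linarith [le_mul_of_one_le_left hR hb]
    · obtain ⟨n, t, hn, ht0, ht1, hc⟩ := exists_spike_lt_renyi_two_sub_renyi hα (log C₂ - log C₁')
      have hp0 : ∀ s, 0 ≤ spike n t s := fun s => (spike_pos hn ht0 ht1 s).le
      have hR := renyi_nonneg hp0 (sum_spike hn) α
      refine ⟨n + 1, spike n t, by omega, hp0, sum_spike hn,
        Or.inr (mul_exp_neg_lt_mul_exp_neg hC₂ hC₁' ?_)⟩
      linarith [mul_le_of_le_one_left hR ha1]
  refine ⟨h_violation, fun ⟨ε, hε⟩ => ?_⟩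
  obtain ⟨L, p, -, hp0, hp1, h⟩ := h_violation
  obtain ⟨h₁, h₂, h₁', h₂'⟩ := hε L p hp0 hp1
  rcases h with h | h <;> linarith

/-- Only the second Rényi entropy can tightly bound a quantity that is
`Θ(e^{-R₂})`: for `α ≠ 2` there is a distribution violating one of the two-sided bounds,
and consequently no such doubly-bounded quantity `ε` exists. -/
theorem renyi_two_is_the_unique_tight_exponent
    (α : ℝ) (hα0 : 0 < α) (hα2 : α ≠ 2)
    (a b : ℝ) (ha0 : 0 < a) (ha1 : a ≤ 1) (hb : 1 ≤ b)
    (C₁ C₂ C₁' C₂' : ℝ) (hC₁ : 0 < C₁) (hC₂ : 0 < C₂) (hC₁' : 0 < C₁') (hC₂' : 0 < C₂') :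
    (∃ (L : ℕ) (p : Fin L → ℝ), 1 ≤ L ∧ (∀ s, 0 ≤ p s) ∧ (∑ s, p s = 1) ∧
        (C₂' * Real.exp (-(b * renyi α p)) < C₁ * Real.exp (-(renyi 2 p)) ∨
          C₂ * Real.exp (-(renyi 2 p)) < C₁' * Real.exp (-(a * renyi α p)))) ∧
      ¬∃ ε : (L : ℕ) → (Fin L → ℝ) → ℝ,
          ∀ (L : ℕ) (p : Fin L → ℝ), (∀ s, 0 ≤ p s) → (∑ s, p s = 1) →
            (C₁ * Real.exp (-(renyi 2 p)) ≤ ε L p ∧ ε L p ≤ C₂ * Real.exp (-(renyi 2 p)) ∧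
              C₁' * Real.exp (-(a * renyi α p)) ≤ ε L p ∧
              ε L p ≤ C₂' * Real.exp (-(b * renyi α p))) :=
  renyi_two_is_the_unique_tight_exponent_general α hα2 a b ha1 hb C₁ C₂ C₁' C₂' hC₁ hC₂ hC₁' hC₂'

end
end
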